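/- arXiv:2009.11487 — 2 statements merged into one kernel-verified Lean document; each statement's English description precedes it below -/
import Mathlib

section
/- For a smooth map n from an open set Ω ⊂ ℝ³ to the unit sphere S², the identity |n ∧ curl n|² = |(∇n) n|² holds pointwise, where (∇n)n denotes the directional derivative of n along n. -/
open scoped BigOperators

/-- Partial derivative `∂_j f_i (x)` of a vector field `f : ℝ³ → ℝ³`. -/
noncomputable def pd3 (f : (Fin 3 → ℝ) → (Fin 3 → ℝ)) (x : Fin 3 → ℝ) (i j : Fin 3) : ℝ :=
  fderiv ℝ f x (Pi.single j 1) i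

/-- The curl `∇ × f` of a vector field `f : ℝ³ → ℝ³`. -/
noncomputable def curl3 (f : (Fin 3 → ℝ) → (Fin 3 → ℝ)) (x : Fin 3 → ℝ) : Fin 3 → ℝ :=
  ![pd3 f x 2 1 - pd3 f x 1 2, pd3 f x 0 2 - pd3 f x 2 0, pd3 f x 1 0 - pd3 f x 0 1]

/-!
Write `A = ∇n(x)`. Pointwise linear algebra gives `n × curl n = Aᵀ n - A n`, and differentiating
`|n|² = 1` gives `Aᵀ n = 0`; hence `n × curl n = -(∇n) n`.
-/

open Filter Topology

theorem sum_mul_fderiv_apply_eq_zero_of_sum_sq_eventuallyEq {ι E : Type*} [Fintype ι]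
    [NormedAddCommGroup E] [NormedSpace ℝ E] {f : E → ι → ℝ} {x : E} {c : ℝ}
    (hf : DifferentiableAt ℝ f x) (hc : ∀ᶠ y in 𝓝 x, ∑ i, f y i ^ 2 = c) (v : E) :
    ∑ i, f x i * fderiv ℝ f x v i = 0 := by
  have hsq : HasFDerivAt (fun y => ∑ i, f y i ^ 2)
      (∑ i, (2 * f x i) • (ContinuousLinearMap.proj i).comp (fderiv ℝ f x)) x :=
    HasFDerivAt.fun_sum fun i _ => by
      simpa using ((hasFDerivAt_apply i (f x)).comp x hf.hasFDerivAt).pow 2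
  have hconst : HasFDerivAt (fun y => ∑ i, f y i ^ 2) (0 : E →L[ℝ] ℝ) x :=
    (hasFDerivAt_const c x).congr_of_eventuallyEq hc
  have h := congrArg (· v) (hsq.unique hconst)
  simp only [sum_apply, smul_apply, ContinuousLinearMap.comp_apply,
    ContinuousLinearMap.proj_apply, smul_eq_mul, zero_apply, mul_assoc, ← Finset.mul_sum] at h
  simpa using h

open Matrix

/-- The axial vector of `A - Aᵀ`; for the Jacobian matrix `A` of `f` it is `curl f`. -/
def Matrix.axialVec {R : Type*} [Ring R] (A : Matrix (Fin 3) (Fin 3) R) : Fin 3 → R :=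
  ![A 2 1 - A 1 2, A 0 2 - A 2 0, A 1 0 - A 0 1]

theorem Matrix.cross_axialVec {R : Type*} [CommRing R] (a : Fin 3 → R)
    (A : Matrix (Fin 3) (Fin 3) R) : a ⨯₃ A.axialVec = a ᵥ* A - A *ᵥ a := by
  ext i
  fin_cases i <;>
    simp [cross_apply, axialVec, vecMul, mulVec, dotProduct, Fin.sum_univ_three] <;> ring

/-- For a C¹ map `n` from an open set `Ω ⊆ ℝ³` to the unit sphere `S²`, pointwise
`|n ∧ curl n|² = |(∇n) n|²`, where `(∇n)n` has `i`-th component `∑ j, n j ∂_j n_i`. -/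
theorem stmt0 (Ω : Set (Fin 3 → ℝ)) (hΩ : IsOpen Ω)
    (n : (Fin 3 → ℝ) → (Fin 3 → ℝ))
    (hn : ∀ x ∈ Ω, DifferentiableAt ℝ n x)
    (hunit : ∀ x ∈ Ω, ∑ i, (n x i) ^ 2 = 1) :
    ∀ x ∈ Ω,
      ∑ i, (crossProduct (n x) (curl3 n x) i) ^ 2
        = ∑ i, (∑ j, n x j * pd3 n x i j) ^ 2 := by
  intro x hx
  let A : Matrix (Fin 3) (Fin 3) ℝ := Matrix.of (pd3 n x)
  have hcurl : curl3 n x = A.axialVec := rfl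
  have horth : n x ᵥ* A = 0 := funext fun j =>
    sum_mul_fderiv_apply_eq_zero_of_sum_sq_eventuallyEq (hn x hx)
      (Filter.eventually_of_mem (hΩ.mem_nhds hx) hunit) (Pi.single j 1)
  rw [hcurl, cross_axialVec, horth, zero_sub]
  simp [A, mulVec, dotProduct, mul_comm]
end

section
/- Let W : ℝ → [0,∞] be continuous on [0, s₊] with W(0) = W(s₊) = 0 and W > 0 on (0, s₊), and let β > 0. Then for any a > 0 and any Lipschitz function s : [−a, a] → ℝ with s(−a) = 0 and s(a) = s₊, one has ∫_{−a}^{a} (β ṡ(t)² + W(s(t))) dt ≥ 2√β ∫_0^{s₊} √(W(τ)) dτ. -/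
/-!
Modica–Mortola trick. With `G' = √W`, AM–GM gives pointwise
`β ṡ² + W(s) ≥ 2√β √W(s) ṡ = 2√β (G ∘ s)'`, and integrating the right-hand side over `[-a, a]`
gives `2√β (G(s₊) - G(0)) = 2√β ∫₀^{s₊} √W`. Since `W` is only continuous on `[0, s₊]`, `G` is
built from the constant extension of `W|[0, s₊]`, which is continuous, bounded, and lies below `W`
because `W` vanishes at both endpoints. The composite `G ∘ s` is Lipschitz, hence absolutely
continuous, so the fundamental theorem of calculus applies to it.
-/

open MeasureTheory Set

theorem ofReal_integral_le_lintegral_ofReal {α : Type*} [MeasurableSpace α] {μ : Measure α}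
    (f : α → ℝ) : ENNReal.ofReal (∫ x, f x ∂μ) ≤ ∫⁻ x, ENNReal.ofReal (f x) ∂μ := by
  by_cases hf : Integrable f μ
  · rw [integral_eq_lintegral_pos_part_sub_lintegral_neg_part hf]
    exact (ENNReal.ofReal_le_ofReal (sub_le_self _ ENNReal.toReal_nonneg)).trans
      ENNReal.ofReal_toReal_le
  · simp [integral_undef hf]

theorem AbsolutelyContinuousOnInterval.ofReal_sub_le_lintegral_deriv {f : ℝ → ℝ} {a b : ℝ}
    (hf : AbsolutelyContinuousOnInterval f a b) (hab : a ≤ b) :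
    ENNReal.ofReal (f b - f a) ≤ ∫⁻ t in Icc a b, ENNReal.ofReal (deriv f t) := by
  rw [← hf.integral_deriv_eq_sub, intervalIntegral.integral_of_le hab,
    ← integral_Icc_eq_integral_Ioc]
  exact ofReal_integral_le_lintegral_ofReal _

theorem exists_lipschitzWith_primitive {g : ℝ → ℝ} (hg : Continuous g)
    (hb : Bornology.IsBounded (range g)) (c : ℝ) :
    ∃ K, LipschitzWith K fun u => ∫ x in c..u, g x := by
  obtain ⟨R, hR⟩ := hb.exists_norm_le
  refine ⟨R.toNNReal, lipschitzWith_of_nnnorm_deriv_le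
    (fun u => (hg.integral_hasStrictDerivAt c u).hasDerivAt.differentiableAt) fun u => ?_⟩
  rw [hg.deriv_integral, ← NNReal.coe_le_coe, coe_nnnorm]
  exact (hR _ (mem_range_self u)).trans (Real.le_coe_toNNReal R)

theorem exists_lipschitzWith_primitive_IccExtend {a b : ℝ} (hab : a ≤ b) {f : Icc a b → ℝ}
    (hf : Continuous f) (c : ℝ) : ∃ K, LipschitzWith K fun u => ∫ x in c..u, IccExtend hab f x :=
  exists_lipschitzWith_primitive (continuous_IccExtend_iff.2 hf)
    (by rw [IccExtend_range]; exact (isCompact_range hf).isBounded) c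

theorem IccExtend_domRestrict_le {W : ℝ → ℝ} {a b : ℝ} (hab : a ≤ b) (hW : ∀ τ, 0 ≤ W τ)
    (ha : W a = 0) (hb : W b = 0) (τ : ℝ) : IccExtend hab ((Icc a b).domRestrict W) τ ≤ W τ := by
  rcases lt_or_ge τ a with hτa | hτa
  · simpa [IccExtend_of_le_left _ _ hτa.le, ha] using hW τ
  rcases le_or_gt τ b with hτb | hτb
  · rw [IccExtend_of_mem _ _ ⟨hτa, hτb⟩]
    rfl
  · simpa [IccExtend_of_right_le _ _ hτb.le, hb] using hW τ

theorem two_mul_sqrt_mul_mul_le_add {β c w : ℝ} (hβ : 0 ≤ β) (hcw : c ^ 2 ≤ w) (x : ℝ) :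
    2 * √β * (c * x) ≤ β * x ^ 2 + w := by
  nlinarith [sq_nonneg (√β * x - c), Real.sq_sqrt hβ]

theorem stmt5_general (W : ℝ → ℝ) (sp β : ℝ) (hsp : 0 < sp) (hβ : 0 < β)
    (hW0 : ∀ τ, 0 ≤ W τ) (hWc : ContinuousOn W (Set.Icc 0 sp))
    (hW00 : W 0 = 0) (hWs : W sp = 0)
    (a : ℝ) (ha : 0 < a) (s : ℝ → ℝ) (K : NNReal) (hLip : LipschitzWith K s)
    (h₁ : s (-a) = 0) (h₂ : s a = sp) :
    ENNReal.ofReal (2 * Real.sqrt β * ∫ τ in (0 : ℝ)..sp, Real.sqrt (W τ))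
      ≤ ∫⁻ t in Set.Icc (-a) a, ENNReal.ofReal (β * (deriv s t) ^ 2 + W (s t)) := by
  have hsqrtW : Continuous (Real.sqrt ∘ (Icc 0 sp).domRestrict W) := hWc.domRestrict.sqrt
  set g := IccExtend hsp.le (Real.sqrt ∘ (Icc 0 sp).domRestrict W)
  set G := fun u => ∫ τ in (0 : ℝ)..u, g τ
  have hgc : Continuous g := continuous_IccExtend_iff.2 hsqrtW
  obtain ⟨L, hG⟩ := exists_lipschitzWith_primitive_IccExtend hsp.le hsqrtW 0
  set F := fun t => 2 * √β * G (s t)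
  have hF : AbsolutelyContinuousOnInterval F (-a) a :=
    ((hG.comp hLip).lipschitzOnWith.absolutelyContinuousOnInterval).const_mul _
  have hFa : F a - F (-a) = 2 * √β * ∫ τ in (0 : ℝ)..sp, √(W τ) := by
    simp only [F, G, h₁, h₂, intervalIntegral.integral_same, mul_zero, sub_zero]
    congr 1
    refine intervalIntegral.integral_congr fun τ hτ => ?_
    rw [uIcc_of_le hsp.le] at hτ
    simp [g, IccExtend_of_mem _ _ hτ]
  have hF' : ∀ᵐ t, ENNReal.ofReal (deriv F t) ≤ ENNReal.ofReal (β * deriv s t ^ 2 + W (s t)) := by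
    filter_upwards [hLip.ae_differentiableAt (μ := volume)] with t ht
    have hFt : HasDerivAt F (2 * √β * (g (s t) * deriv s t)) t :=
      ((hgc.integral_hasStrictDerivAt 0 (s t)).hasDerivAt.comp t ht.hasDerivAt).const_mul _
    rw [hFt.deriv]
    refine ENNReal.ofReal_le_ofReal (two_mul_sqrt_mul_mul_le_add hβ.le ?_ _)
    rw [show g (s t) ^ 2 = IccExtend hsp.le ((Icc 0 sp).domRestrict W) (s t) from
      Real.sq_sqrt (hW0 _)]
    exact IccExtend_domRestrict_le hsp.le hW0 hW00 hWs (s t)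
  calc ENNReal.ofReal (2 * √β * ∫ τ in (0 : ℝ)..sp, √(W τ))
      = ENNReal.ofReal (F a - F (-a)) := by rw [hFa]
    _ ≤ ∫⁻ t in Icc (-a) a, ENNReal.ofReal (deriv F t) :=
      hF.ofReal_sub_le_lintegral_deriv (by linarith)
    _ ≤ _ := lintegral_mono_ae (ae_restrict_of_ae hF')

/-- Let `W : ℝ → [0,∞)` be continuous on `[0, sp]` (`sp` plays the role of `s₊`) with
`W(0) = W(sp) = 0` and `W > 0` on `(0, sp)`, and let `β > 0`.  Then for any `a > 0` and any
Lipschitz `s : [−a,a] → ℝ` with `s(−a) = 0`, `s(a) = sp`: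
`∫_{−a}^{a} (β ṡ² + W(s)) dt ≥ 2√β ∫_0^{sp} √(W(τ)) dτ`. -/
theorem stmt5 (W : ℝ → ℝ) (sp β : ℝ) (hsp : 0 < sp) (hβ : 0 < β)
    (hW0 : ∀ τ, 0 ≤ W τ) (hWc : ContinuousOn W (Set.Icc 0 sp))
    (hW00 : W 0 = 0) (hWs : W sp = 0) (hWpos : ∀ τ ∈ Set.Ioo 0 sp, 0 < W τ)
    (a : ℝ) (ha : 0 < a) (s : ℝ → ℝ) (K : NNReal) (hLip : LipschitzWith K s)
    (h₁ : s (-a) = 0) (h₂ : s a = sp) :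
    ENNReal.ofReal (2 * Real.sqrt β * ∫ τ in (0 : ℝ)..sp, Real.sqrt (W τ))
      ≤ ∫⁻ t in Set.Icc (-a) a, ENNReal.ofReal (β * (deriv s t) ^ 2 + W (s t)) :=
  stmt5_general W sp β hsp hβ hW0 hWc hW00 hWs a ha s K hLip h₁ h₂
end
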